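/- Suppose (B, P) solves the static MHD equilibrium system div B = 0, (curl B) × B = grad P (with μ = 1), and suppose ψ is a smooth function with grad ψ · B = 0 and grad ψ · curl B = 0. Let F₁, F₂ be smooth real functions with F₁ nonvanishing, and let C be a constant with C + F₂(ψ)² > 0. Define B₁ = √(C + F₂(ψ)²) B, V₁ = (F₂(ψ)/F₁(ψ)) B, P₁ = C P − F₂(ψ)² |B|²/2, ρ₁ = F₁(ψ)². Then (V₁, B₁, P₁, ρ₁) satisfies the time-independent MHD equations: div(ρ₁V₁) = 0, div V₁ = 0, div B₁ = 0, curl(V₁ × B₁) = 0, and ρ₁ V₁ × curl V₁ + (curl B₁) × B₁ − grad P₁ − ρ₁ grad(|V₁|²/2) = 0. -/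

import Mathlib

noncomputable def vdiv (V : (Fin 3 → ℝ) → (Fin 3 → ℝ)) (x : Fin 3 → ℝ) : ℝ :=
  ∑ i, fderiv ℝ V x (Pi.single i 1) i

noncomputable def vgrad (f : (Fin 3 → ℝ) → ℝ) (x : Fin 3 → ℝ) : Fin 3 → ℝ :=
  fun i => fderiv ℝ f x (Pi.single i 1)

noncomputable def vdot (u v : Fin 3 → ℝ) : ℝ := ∑ i, u i * v i

noncomputable def vcross (u v : Fin 3 → ℝ) : Fin 3 → ℝ :=
  ![u 1 * v 2 - u 2 * v 1, u 2 * v 0 - u 0 * v 2, u 0 * v 1 - u 1 * v 0]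

noncomputable def vcurl (B : (Fin 3 → ℝ) → (Fin 3 → ℝ)) (x : Fin 3 → ℝ) : Fin 3 → ℝ :=
  ![fderiv ℝ B x (Pi.single 1 1) 2 - fderiv ℝ B x (Pi.single 2 1) 1,
    fderiv ℝ B x (Pi.single 2 1) 0 - fderiv ℝ B x (Pi.single 0 1) 2,
    fderiv ℝ B x (Pi.single 0 1) 1 - fderiv ℝ B x (Pi.single 1 1) 0]

set_option maxHeartbeats 1000000 in
/-- The Bogoyavlenskij transformation of a static MHD equilibrium into a
field-aligned dynamic equilibrium. -/
theorem bogoyavlenskij_transform_static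
    (U : Set (Fin 3 → ℝ)) (hU : IsOpen U)
    (B : (Fin 3 → ℝ) → (Fin 3 → ℝ)) (P ψ : (Fin 3 → ℝ) → ℝ)
    (hB : ContDiffOn ℝ (⊤ : ℕ∞) B U) (hP : ContDiffOn ℝ (⊤ : ℕ∞) P U) (hψ : ContDiffOn ℝ (⊤ : ℕ∞) ψ U)
    (hdivB : ∀ x ∈ U, vdiv B x = 0)
    (hforce : ∀ x ∈ U, vcross (vcurl B x) (B x) = vgrad P x)
    (hψB : ∀ x ∈ U, vdot (vgrad ψ x) (B x) = 0)
    (hψJ : ∀ x ∈ U, vdot (vgrad ψ x) (vcurl B x) = 0)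
    (F₁ F₂ : ℝ → ℝ) (hF₁ : ContDiff ℝ (⊤ : ℕ∞) F₁) (hF₂ : ContDiff ℝ (⊤ : ℕ∞) F₂)
    (hF₁ne : ∀ t, F₁ t ≠ 0)
    (C : ℝ) (hC : ∀ x ∈ U, 0 < C + F₂ (ψ x) ^ 2)
    (B₁ V₁ : (Fin 3 → ℝ) → (Fin 3 → ℝ)) (P₁ ρ₁ : (Fin 3 → ℝ) → ℝ)
    (hB₁ : ∀ x, B₁ x = Real.sqrt (C + F₂ (ψ x) ^ 2) • B x)
    (hV₁ : ∀ x, V₁ x = (F₂ (ψ x) / F₁ (ψ x)) • B x)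
    (hP₁ : ∀ x, P₁ x = C * P x - F₂ (ψ x) ^ 2 * vdot (B x) (B x) / 2)
    (hρ₁ : ∀ x, ρ₁ x = F₁ (ψ x) ^ 2) :
    ∀ x ∈ U,
      vdiv (fun y => ρ₁ y • V₁ y) x = 0 ∧
      vdiv V₁ x = 0 ∧
      vdiv B₁ x = 0 ∧
      vcurl (fun y => vcross (V₁ y) (B₁ y)) x = 0 ∧
      ρ₁ x • vcross (V₁ x) (vcurl V₁ x) + vcross (vcurl B₁ x) (B₁ x)
        - vgrad P₁ x - ρ₁ x • vgrad (fun y => vdot (V₁ y) (V₁ y) / 2) x = 0 := by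
  intro x hx
  have hmem : U ∈ nhds x := hU.mem_nhds hx
  have hBd : DifferentiableAt ℝ B x := ((hB x hx).contDiffAt hmem).differentiableAt (by simp)
  have hPd : DifferentiableAt ℝ P x := ((hP x hx).contDiffAt hmem).differentiableAt (by simp)
  have hψd : DifferentiableAt ℝ ψ x := ((hψ x hx).contDiffAt hmem).differentiableAt (by simp)
  have hψ' : HasFDerivAt ψ (fderiv ℝ ψ x) x := hψd.hasFDerivAt
  have hB' : HasFDerivAt B (fderiv ℝ B x) x := hBd.hasFDerivAt
  have hP' : HasFDerivAt P (fderiv ℝ P x) x := hPd.hasFDerivAt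
  have hF1t : HasDerivAt F₁ (deriv F₁ (ψ x)) (ψ x) := ((hF₁.differentiable (by simp)) (ψ x)).hasDerivAt
  have hF2t : HasDerivAt F₂ (deriv F₂ (ψ x)) (ψ x) := ((hF₂.differentiable (by simp)) (ψ x)).hasDerivAt
  have hF1ψ : HasFDerivAt (fun y => F₁ (ψ y)) (deriv F₁ (ψ x) • fderiv ℝ ψ x) x :=
    hF1t.comp_hasFDerivAt x hψ'
  have hF2ψ : HasFDerivAt (fun y => F₂ (ψ y)) (deriv F₂ (ψ x) • fderiv ℝ ψ x) x :=
    hF2t.comp_hasFDerivAt x hψ'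
  have hCpos := hC x hx
  have hspos : 0 < Real.sqrt (C + F₂ (ψ x) ^ 2) := Real.sqrt_pos.mpr hCpos
  have hsne : Real.sqrt (C + F₂ (ψ x) ^ 2) ≠ 0 := ne_of_gt hspos
  have hs2 : Real.sqrt (C + F₂ (ψ x) ^ 2) ^ 2 = C + F₂ (ψ x) ^ 2 := Real.sq_sqrt hCpos.le
  -- derivative of the square-root coefficient
  have hq : HasFDerivAt (fun y => C + F₂ (ψ y) ^ 2)
      ((2 * (F₂ (ψ x) * deriv F₂ (ψ x))) • fderiv ℝ ψ x) x := by
    have h2 : HasFDerivAt (fun y : Fin 3 → ℝ => F₂ (ψ y) ^ 2)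
        (F₂ (ψ x) • (deriv F₂ (ψ x) • fderiv ℝ ψ x)
          + F₂ (ψ x) • (deriv F₂ (ψ x) • fderiv ℝ ψ x)) x := by
      simp only [pow_two]
      exact hF2ψ.mul hF2ψ
    have hder : F₂ (ψ x) • (deriv F₂ (ψ x) • fderiv ℝ ψ x)
          + F₂ (ψ x) • (deriv F₂ (ψ x) • fderiv ℝ ψ x)
        = (2 * (F₂ (ψ x) * deriv F₂ (ψ x))) • fderiv ℝ ψ x := by module
    exact (h2.const_add C).congr_fderiv hder
  have ha : HasFDerivAt (fun y => Real.sqrt (C + F₂ (ψ y) ^ 2))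
      ((F₂ (ψ x) * deriv F₂ (ψ x) / Real.sqrt (C + F₂ (ψ x) ^ 2)) • fderiv ℝ ψ x) x := by
    refine (hq.sqrt (ne_of_gt hCpos)).congr_fderiv ?_
    rw [smul_smul]
    congr 1
    field_simp
  -- derivative of the quotient coefficient
  have hb : HasFDerivAt (fun y => F₂ (ψ y) / F₁ (ψ y))
      (((deriv F₂ (ψ x) * F₁ (ψ x) - F₂ (ψ x) * deriv F₁ (ψ x)) / F₁ (ψ x) ^ 2)
        • fderiv ℝ ψ x) x :=
    (hF2t.div hF1t (hF₁ne _)).comp_hasFDerivAt x hψ'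
  -- derivative of the product coefficient
  have hab : HasFDerivAt (fun y => F₁ (ψ y) * F₂ (ψ y))
      ((F₁ (ψ x) * deriv F₂ (ψ x) + F₂ (ψ x) * deriv F₁ (ψ x)) • fderiv ℝ ψ x) x := by
    refine (hF1ψ.mul hF2ψ).congr_fderiv ?_
    module
  -- generic divergence lemma
  have divlem : ∀ (c : (Fin 3 → ℝ) → ℝ) (k : ℝ), HasFDerivAt c (k • fderiv ℝ ψ x) x →
      vdiv (fun y => c y • B y) x = 0 := by
    intro c k hc
    have h : HasFDerivAt (fun y => c y • B y) _ x := hc.smul hB'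
    have h1 := hdivB x hx
    have h2 := hψB x hx
    simp only [vdiv, Fin.sum_univ_three] at h1 ⊢
    simp only [vdot, vgrad, Fin.sum_univ_three] at h2
    rw [h.fderiv]
    simp only [ContinuousLinearMap.add_apply, ContinuousLinearMap.coe_smul', Pi.smul_apply,
      ContinuousLinearMap.smulRight_apply, smul_eq_mul, Pi.add_apply]
    linear_combination c x * h1 + k * h2
  refine ⟨?_, ?_, ?_, ?_, ?_⟩
  · -- div (ρ₁ V₁) = 0
    have hfun : (fun y => ρ₁ y • V₁ y) = fun y => (F₁ (ψ y) * F₂ (ψ y)) • B y := by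
      funext y
      rw [hρ₁, hV₁, smul_smul]
      congr 1
      field_simp [hF₁ne (ψ y)]
      try ring
    rw [hfun]
    exact divlem _ _ hab
  · -- div V₁ = 0
    have hfun : V₁ = fun y => (F₂ (ψ y) / F₁ (ψ y)) • B y := funext hV₁
    rw [hfun]
    exact divlem _ _ hb
  · -- div B₁ = 0
    have hfun : B₁ = fun y => Real.sqrt (C + F₂ (ψ y) ^ 2) • B y := funext hB₁
    rw [hfun]
    exact divlem _ _ ha
  · -- curl (V₁ × B₁) = 0
    have hfun : (fun y => vcross (V₁ y) (B₁ y)) = fun _ => (0 : Fin 3 → ℝ) := by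
      funext y
      rw [hV₁, hB₁]
      funext i
      fin_cases i <;>
        simp [vcross, Pi.smul_apply, smul_eq_mul] <;> ring
    rw [hfun]
    have : fderiv ℝ (fun _ : Fin 3 → ℝ => (0 : Fin 3 → ℝ)) x = 0 := fderiv_const_apply 0
    funext i
    fin_cases i <;> simp [vcurl, this]
  · -- momentum equation
    have hV1' : HasFDerivAt V₁
        ((F₂ (ψ x) / F₁ (ψ x)) • fderiv ℝ B x
          + ((((deriv F₂ (ψ x) * F₁ (ψ x) - F₂ (ψ x) * deriv F₁ (ψ x)) / F₁ (ψ x) ^ 2)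
              • fderiv ℝ ψ x)).smulRight (B x)) x := by
      have hfun : V₁ = fun y => (F₂ (ψ y) / F₁ (ψ y)) • B y := funext hV₁
      rw [hfun]
      exact hb.smul hB'
    have hB1' : HasFDerivAt B₁
        (Real.sqrt (C + F₂ (ψ x) ^ 2) • fderiv ℝ B x
          + (((F₂ (ψ x) * deriv F₂ (ψ x) / Real.sqrt (C + F₂ (ψ x) ^ 2))
              • fderiv ℝ ψ x)).smulRight (B x)) x := by
      have hfun : B₁ = fun y => Real.sqrt (C + F₂ (ψ y) ^ 2) • B y := funext hB₁
      rw [hfun]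
      exact ha.smul hB'
    -- component functions of B
    have hB0 : HasFDerivAt (fun y => B y 0)
        ((ContinuousLinearMap.proj 0).comp (fderiv ℝ B x)) x := by
      exact
        ((ContinuousLinearMap.proj (R := ℝ) (φ := fun _ : Fin 3 => ℝ) 0).hasFDerivAt).comp x hB'
    have hB1c : HasFDerivAt (fun y => B y 1)
        ((ContinuousLinearMap.proj 1).comp (fderiv ℝ B x)) x := by
      exact
        ((ContinuousLinearMap.proj (R := ℝ) (φ := fun _ : Fin 3 => ℝ) 1).hasFDerivAt).comp x hB'
    have hB2c : HasFDerivAt (fun y => B y 2)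
        ((ContinuousLinearMap.proj 2).comp (fderiv ℝ B x)) x := by
      exact
        ((ContinuousLinearMap.proj (R := ℝ) (φ := fun _ : Fin 3 => ℝ) 2).hasFDerivAt).comp x hB'
    have hQ' := ((hB0.mul hB0).add (hB1c.mul hB1c)).add (hB2c.mul hB2c)
    have hF2sq := hF2ψ.mul hF2ψ
    have hP1' : HasFDerivAt P₁
        (C • fderiv ℝ P x - (2⁻¹ : ℝ) •
          ((F₂ (ψ x) * F₂ (ψ x)) •
              (((B x 0 • ((ContinuousLinearMap.proj 0).comp (fderiv ℝ B x))
                + B x 0 • ((ContinuousLinearMap.proj 0).comp (fderiv ℝ B x)))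
                + (B x 1 • ((ContinuousLinearMap.proj 1).comp (fderiv ℝ B x))
                  + B x 1 • ((ContinuousLinearMap.proj 1).comp (fderiv ℝ B x))))
                + (B x 2 • ((ContinuousLinearMap.proj 2).comp (fderiv ℝ B x))
                  + B x 2 • ((ContinuousLinearMap.proj 2).comp (fderiv ℝ B x))))
            + (B x 0 * B x 0 + B x 1 * B x 1 + B x 2 * B x 2) •
              (F₂ (ψ x) • (deriv F₂ (ψ x) • fderiv ℝ ψ x)
                + F₂ (ψ x) • (deriv F₂ (ψ x) • fderiv ℝ ψ x)))) x := by
      have hfun : P₁ = fun y => C * P y - 2⁻¹ *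
          ((F₂ (ψ y) * F₂ (ψ y)) * (B y 0 * B y 0 + B y 1 * B y 1 + B y 2 * B y 2)) := by
        funext y
        rw [hP₁]
        simp [vdot, Fin.sum_univ_three]
        ring
      rw [hfun]
      exact (hP'.const_mul C).sub ((hF2sq.mul hQ').const_mul (2⁻¹ : ℝ))
    have hKE' : HasFDerivAt (fun y => vdot (V₁ y) (V₁ y) / 2)
        ((2⁻¹ : ℝ) •
          (((F₂ (ψ x) / F₁ (ψ x)) * (F₂ (ψ x) / F₁ (ψ x))) •
              (((B x 0 • ((ContinuousLinearMap.proj 0).comp (fderiv ℝ B x))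
                + B x 0 • ((ContinuousLinearMap.proj 0).comp (fderiv ℝ B x)))
                + (B x 1 • ((ContinuousLinearMap.proj 1).comp (fderiv ℝ B x))
                  + B x 1 • ((ContinuousLinearMap.proj 1).comp (fderiv ℝ B x))))
                + (B x 2 • ((ContinuousLinearMap.proj 2).comp (fderiv ℝ B x))
                  + B x 2 • ((ContinuousLinearMap.proj 2).comp (fderiv ℝ B x))))
            + (B x 0 * B x 0 + B x 1 * B x 1 + B x 2 * B x 2) •
              ((F₂ (ψ x) / F₁ (ψ x)) •
                  (((deriv F₂ (ψ x) * F₁ (ψ x) - F₂ (ψ x) * deriv F₁ (ψ x)) / F₁ (ψ x) ^ 2)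
                    • fderiv ℝ ψ x)
                + (F₂ (ψ x) / F₁ (ψ x)) •
                  (((deriv F₂ (ψ x) * F₁ (ψ x) - F₂ (ψ x) * deriv F₁ (ψ x)) / F₁ (ψ x) ^ 2)
                    • fderiv ℝ ψ x)))) x := by
      have hfun : (fun y => vdot (V₁ y) (V₁ y) / 2) = fun y => 2⁻¹ *
          (((F₂ (ψ y) / F₁ (ψ y)) * (F₂ (ψ y) / F₁ (ψ y)))
            * (B y 0 * B y 0 + B y 1 * B y 1 + B y 2 * B y 2)) := by
        funext y
        rw [hV₁]
        simp [vdot, Fin.sum_univ_three]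
        ring
      rw [hfun]
      exact ((hb.mul hb).mul hQ').const_mul (2⁻¹ : ℝ)
    have hf := hforce x hx
    have hgb := hψB x hx
    have hf0 := congrFun hf 0
    have hf1 := congrFun hf 1
    have hf2 := congrFun hf 2
    simp only [vcross, vcurl, vgrad, Matrix.cons_val_zero, Matrix.cons_val_one,
      Matrix.head_cons, Matrix.cons_val_two, Matrix.tail_cons] at hf0 hf1 hf2
    simp only [vdot, vgrad, Fin.sum_univ_three] at hgb
    have hu : Real.sqrt (C + F₂ (ψ x) ^ 2) *
        (F₂ (ψ x) * deriv F₂ (ψ x) / Real.sqrt (C + F₂ (ψ x) ^ 2))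
        = F₂ (ψ x) * deriv F₂ (ψ x) := by field_simp
    have hv : F₁ (ψ x) * (F₂ (ψ x) / F₁ (ψ x)) = F₂ (ψ x) := by field_simp [hF₁ne]
    have hw : F₁ (ψ x) ^ 2 *
        ((deriv F₂ (ψ x) * F₁ (ψ x) - F₂ (ψ x) * deriv F₁ (ψ x)) / F₁ (ψ x) ^ 2)
        = deriv F₂ (ψ x) * F₁ (ψ x) - F₂ (ψ x) * deriv F₁ (ψ x) := by
      field_simp
      try exact mul_div_cancel_left₀ _ (pow_ne_zero 2 (hF₁ne (ψ x)))
      rw [mul_div_cancel_left₀ _ (hF₁ne (ψ x))]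
    funext k
    fin_cases k <;>
      [skip; skip; skip] <;>
      simp only [vcross, vcurl, vgrad, Fin.isValue, Fin.zero_eta, Fin.mk_one, Fin.reduceFinMk,
        Matrix.cons_val_zero, Matrix.cons_val_one,
        Matrix.head_cons, Matrix.cons_val_two, Matrix.tail_cons, Pi.add_apply, Pi.sub_apply,
        Pi.smul_apply, smul_eq_mul, Pi.zero_apply] <;>
      rw [hρ₁, hV₁, hB₁, hV1'.fderiv, hB1'.fderiv, hP1'.fderiv, hKE'.fderiv] <;>
      simp only [ContinuousLinearMap.add_apply, ContinuousLinearMap.sub_apply,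
        ContinuousLinearMap.coe_smul', Pi.smul_apply, ContinuousLinearMap.smulRight_apply,
        ContinuousLinearMap.coe_comp', Function.comp_apply, ContinuousLinearMap.proj_apply,
        smul_eq_mul, Pi.add_apply, Pi.sub_apply, Fin.isValue, Fin.zero_eta, Fin.mk_one,
        Fin.reduceFinMk, Matrix.cons_val_zero, Matrix.cons_val_one, Matrix.cons_val_two,
        Matrix.head_cons, Matrix.tail_cons]
    · linear_combination C * hf0
        + ((fderiv ℝ B x (Pi.single 2 1) 0 - fderiv ℝ B x (Pi.single 0 1) 2) * B x 2
          - (fderiv ℝ B x (Pi.single 0 1) 1 - fderiv ℝ B x (Pi.single 1 1) 0) * B x 1) * hs2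
        + (-(F₂ (ψ x) + F₁ (ψ x) * (F₂ (ψ x) / F₁ (ψ x)))
            * (((fderiv ℝ B x (Pi.single 2 1) 0 - fderiv ℝ B x (Pi.single 0 1) 2) * B x 2
              - (fderiv ℝ B x (Pi.single 0 1) 1 - fderiv ℝ B x (Pi.single 1 1) 0) * B x 1)
              + (B x 0 * fderiv ℝ B x (Pi.single 0 1) 0 + B x 1 * fderiv ℝ B x (Pi.single 0 1) 1
                + B x 2 * fderiv ℝ B x (Pi.single 0 1) 2))
          - deriv F₂ (ψ x) * (fderiv ℝ ψ x (Pi.single 0 1) * B x 0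
              + fderiv ℝ ψ x (Pi.single 1 1) * B x 1
              + fderiv ℝ ψ x (Pi.single 2 1) * B x 2) * B x 0) * hv
        + ((fderiv ℝ ψ x (Pi.single 0 1) * B x 0 + fderiv ℝ ψ x (Pi.single 1 1) * B x 1
              + fderiv ℝ ψ x (Pi.single 2 1) * B x 2) * B x 0
          - fderiv ℝ ψ x (Pi.single 0 1)
              * (B x 0 * B x 0 + B x 1 * B x 1 + B x 2 * B x 2)) * hu
        + (-((F₂ (ψ x) / F₁ (ψ x)) * (fderiv ℝ ψ x (Pi.single 0 1) * B x 0
              + fderiv ℝ ψ x (Pi.single 1 1) * B x 1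
              + fderiv ℝ ψ x (Pi.single 2 1) * B x 2) * B x 0)) * hw
        + ((F₂ (ψ x) / F₁ (ψ x)) * F₂ (ψ x) * deriv F₁ (ψ x) * B x 0) * hgb
    · linear_combination C * hf1
        + ((fderiv ℝ B x (Pi.single 0 1) 1 - fderiv ℝ B x (Pi.single 1 1) 0) * B x 0
          - (fderiv ℝ B x (Pi.single 1 1) 2 - fderiv ℝ B x (Pi.single 2 1) 1) * B x 2) * hs2
        + (-(F₂ (ψ x) + F₁ (ψ x) * (F₂ (ψ x) / F₁ (ψ x)))
            * (((fderiv ℝ B x (Pi.single 0 1) 1 - fderiv ℝ B x (Pi.single 1 1) 0) * B x 0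
              - (fderiv ℝ B x (Pi.single 1 1) 2 - fderiv ℝ B x (Pi.single 2 1) 1) * B x 2)
              + (B x 0 * fderiv ℝ B x (Pi.single 1 1) 0 + B x 1 * fderiv ℝ B x (Pi.single 1 1) 1
                + B x 2 * fderiv ℝ B x (Pi.single 1 1) 2))
          - deriv F₂ (ψ x) * (fderiv ℝ ψ x (Pi.single 0 1) * B x 0
              + fderiv ℝ ψ x (Pi.single 1 1) * B x 1
              + fderiv ℝ ψ x (Pi.single 2 1) * B x 2) * B x 1) * hv
        + ((fderiv ℝ ψ x (Pi.single 0 1) * B x 0 + fderiv ℝ ψ x (Pi.single 1 1) * B x 1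
              + fderiv ℝ ψ x (Pi.single 2 1) * B x 2) * B x 1
          - fderiv ℝ ψ x (Pi.single 1 1)
              * (B x 0 * B x 0 + B x 1 * B x 1 + B x 2 * B x 2)) * hu
        + (-((F₂ (ψ x) / F₁ (ψ x)) * (fderiv ℝ ψ x (Pi.single 0 1) * B x 0
              + fderiv ℝ ψ x (Pi.single 1 1) * B x 1
              + fderiv ℝ ψ x (Pi.single 2 1) * B x 2) * B x 1)) * hw
        + ((F₂ (ψ x) / F₁ (ψ x)) * F₂ (ψ x) * deriv F₁ (ψ x) * B x 1) * hgb
    · linear_combination C * hf2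
        + ((fderiv ℝ B x (Pi.single 1 1) 2 - fderiv ℝ B x (Pi.single 2 1) 1) * B x 1
          - (fderiv ℝ B x (Pi.single 2 1) 0 - fderiv ℝ B x (Pi.single 0 1) 2) * B x 0) * hs2
        + (-(F₂ (ψ x) + F₁ (ψ x) * (F₂ (ψ x) / F₁ (ψ x)))
            * (((fderiv ℝ B x (Pi.single 1 1) 2 - fderiv ℝ B x (Pi.single 2 1) 1) * B x 1
              - (fderiv ℝ B x (Pi.single 2 1) 0 - fderiv ℝ B x (Pi.single 0 1) 2) * B x 0)
              + (B x 0 * fderiv ℝ B x (Pi.single 2 1) 0 + B x 1 * fderiv ℝ B x (Pi.single 2 1) 1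
                + B x 2 * fderiv ℝ B x (Pi.single 2 1) 2))
          - deriv F₂ (ψ x) * (fderiv ℝ ψ x (Pi.single 0 1) * B x 0
              + fderiv ℝ ψ x (Pi.single 1 1) * B x 1
              + fderiv ℝ ψ x (Pi.single 2 1) * B x 2) * B x 2) * hv
        + ((fderiv ℝ ψ x (Pi.single 0 1) * B x 0 + fderiv ℝ ψ x (Pi.single 1 1) * B x 1
              + fderiv ℝ ψ x (Pi.single 2 1) * B x 2) * B x 2
          - fderiv ℝ ψ x (Pi.single 2 1)
              * (B x 0 * B x 0 + B x 1 * B x 1 + B x 2 * B x 2)) * hu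
        + (-((F₂ (ψ x) / F₁ (ψ x)) * (fderiv ℝ ψ x (Pi.single 0 1) * B x 0
              + fderiv ℝ ψ x (Pi.single 1 1) * B x 1
              + fderiv ℝ ψ x (Pi.single 2 1) * B x 2) * B x 2)) * hw
        + ((F₂ (ψ x) / F₁ (ψ x)) * F₂ (ψ x) * deriv F₁ (ψ x) * B x 2) * hgb
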